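/- Let P be a probability measure and ν a finite measure with densities p and r with respect to σ-finite σ. Then ρ_α(ν,P) = ∫ r^α p^(1-α) dσ converges to ν(p > 0) as α ↑ 1. -/

import Mathlib

/-!
By weighted AM–GM, `r ^ α * p ^ (1 - α) ≤ α r + (1 - α) p ≤ r + p` for `α ∈ [0, 1]`, so the
integrands are dominated by the integrable `r + p`. For fixed `x` the integrand is continuous in
`α` (the exponent of a positive base), and at `α = 1` it equals `r` on `{p > 0}` and `0`
elsewhere. Dominated convergence then makes the Hellinger transform continuous on `[0, 1]`.
-/

open MeasureTheory Set Filter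

noncomputable section

def hellingerKernel (α a b : ℝ) : ℝ :=
  if b = 0 ∨ a = 0 then 0 else a ^ α * b ^ (1 - α)

lemma continuous_hellingerKernel (a b : ℝ) : Continuous fun α => hellingerKernel α a b := by
  unfold hellingerKernel
  split_ifs with h
  · exact continuous_const
  · push Not at h
    exact (continuous_const.rpow continuous_id fun _ => Or.inl h.2).mul
      (continuous_const.rpow (continuous_const.sub continuous_id) fun _ => Or.inl h.1)

lemma hellingerKernel_one {a b : ℝ} (hb : 0 ≤ b) :
    hellingerKernel 1 a b = if 0 < b then a else 0 := by
  rcases hb.eq_or_lt with rfl | hb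
  · simp [hellingerKernel]
  · by_cases ha : a = 0 <;> simp [hellingerKernel, ha, hb, hb.ne']

lemma abs_hellingerKernel_le {α a b : ℝ} (hα : α ∈ Icc (0 : ℝ) 1) (ha : 0 ≤ a) (hb : 0 ≤ b) :
    |hellingerKernel α a b| ≤ a + b := by
  unfold hellingerKernel
  split_ifs
  · simpa using add_nonneg ha hb
  · rw [abs_of_nonneg (by positivity)]
    calc a ^ α * b ^ (1 - α) ≤ α * a + (1 - α) * b :=
          Real.geom_mean_le_arith_mean2_weighted hα.1 (sub_nonneg.2 hα.2) ha hb (by ring)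
      _ ≤ a + b := by nlinarith [hα.1, hα.2]

lemma Measurable.hellingerKernel {X : Type*} [MeasurableSpace X] {f g : X → ℝ}
    (hf : Measurable f) (hg : Measurable g) (α : ℝ) :
    Measurable fun x => hellingerKernel α (f x) (g x) :=
  Measurable.ite ((hg (measurableSet_singleton 0)).union (hf (measurableSet_singleton 0)))
    measurable_const ((hf.pow_const α).mul (hg.pow_const (1 - α)))

lemma continuousOn_integral_hellingerKernel {X : Type*} [MeasurableSpace X] (σ : Measure X)
    {p r : X → ℝ} (hp : Measurable p) (hr : Measurable r) (hp0 : ∀ x, 0 ≤ p x)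
    (hr0 : ∀ x, 0 ≤ r x) (hpInt : Integrable p σ) (hrInt : Integrable r σ) :
    ContinuousOn (fun α => ∫ x, hellingerKernel α (r x) (p x) ∂σ) (Icc 0 1) :=
  continuousOn_of_dominated (fun α _ => (hr.hellingerKernel hp α).aestronglyMeasurable)
    (fun _ hα => ae_of_all _ fun x => abs_hellingerKernel_le hα (hr0 x) (hp0 x))
    (hrInt.add hpInt)
    (ae_of_all _ fun x => (continuous_hellingerKernel (r x) (p x)).continuousOn)

end

theorem hellinger_transform_tendsto_one_general
    {X : Type*} [MeasurableSpace X] (σ : Measure X)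
    (p r : X → ℝ) (hp : Measurable p) (hr : Measurable r)
    (hp0 : ∀ x, 0 ≤ p x) (hr0 : ∀ x, 0 ≤ r x)
    (hpInt : Integrable p σ) (hrInt : Integrable r σ) :
    Tendsto
      (fun α : ℝ => ∫ x, (if p x = 0 ∨ r x = 0 then 0 else r x ^ α * p x ^ (1 - α)) ∂σ)
      (nhdsWithin 1 (Iio 1))
      (nhds (∫ x in {x | 0 < p x}, r x ∂σ)) := by
  have hlimit : ∫ x in {x | 0 < p x}, r x ∂σ = ∫ x, hellingerKernel 1 (r x) (p x) ∂σ := by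
    rw [← integral_indicator (measurableSet_lt measurable_const hp)]
    simp only [hellingerKernel_one (hp0 _), indicator_apply, mem_ofPred_eq]
  have hcont := continuousOn_integral_hellingerKernel σ hp hr hp0 hr0 hpInt hrInt 1
    (right_mem_Icc.2 zero_le_one)
  rw [hlimit]
  exact hcont.mono_of_mem_nhdsWithin (Icc_mem_nhdsLT zero_lt_one)

/-- The Hellinger transform `ρ_α(ν,P) = ∫ r^α p^(1-α) dσ` (with the integrand taken to be
`0` where `p = 0` or `r = 0`) converges to `ν(p > 0) = ∫_{p>0} r dσ` as `α ↑ 1`.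
Here `p` is the density of the probability measure `P` and `r` the density of the finite
measure `ν` with respect to the σ-finite measure `σ`. -/
theorem hellinger_transform_tendsto_one
    {X : Type*} [MeasurableSpace X] (σ : Measure X) [SigmaFinite σ]
    (p r : X → ℝ) (hp : Measurable p) (hr : Measurable r)
    (hp0 : ∀ x, 0 ≤ p x) (hr0 : ∀ x, 0 ≤ r x)
    (hpInt : Integrable p σ) (hrInt : Integrable r σ)
    (hprob : ∫ x, p x ∂σ = 1) :
    Tendsto
      (fun α : ℝ => ∫ x, (if p x = 0 ∨ r x = 0 then 0 else r x ^ α * p x ^ (1 - α)) ∂σ)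
      (nhdsWithin 1 (Iio 1))
      (nhds (∫ x in {x | 0 < p x}, r x ∂σ)) :=
  hellinger_transform_tendsto_one_general σ p r hp hr hp0 hr0 hpInt hrInt
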